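/- Let α_1 < ... < α_n (n ≥ 2), 2 ≤ k ≤ n, and define gaps g_i = α_{i+1} - α_i for i = 1,...,n-1. The minimum of Σ_{i=1}^k range(S_i) over all k-partitions of V equals (α_n - α_1) minus the sum of the k-1 largest gaps among g_1,...,g_{n-1}. -/
import Mathlib

open Finset

noncomputable def rng {n : ℕ} (α : Fin n → ℝ) (S : Finset (Fin n)) : ℝ :=
  if h : S.Nonempty then S.sup' h α - S.inf' h α else 0

def IsPartition {n k : ℕ} (P : Fin k → Finset (Fin n)) : Prop :=
  (∀ i, (P i).Nonempty) ∧ (∀ i j, i ≠ j → Disjoint (P i) (P j)) ∧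
    (∀ v : Fin n, ∃ i, v ∈ P i)

/-- The gap `α_{t+1} - α_t` (0-based `t`, `0 ≤ t ≤ n-2`). -/
noncomputable def gap {n : ℕ} (α : Fin n → ℝ) (t : ℕ) : ℝ :=
  if h : t + 1 < n then α ⟨t + 1, h⟩ - α ⟨t, by omega⟩ else 0

noncomputable def bt {n : ℕ} (α : Fin n → ℝ) (hn : 0 < n) (t : ℕ) : ℝ :=
  α ⟨min t (n-1), by omega⟩

lemma gap_eq {n : ℕ} (α : Fin n → ℝ) (hn : 0 < n) (t : ℕ) :
    gap α t = bt α hn (t+1) - bt α hn t := by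
  unfold gap bt
  split
  · next h =>
    have h1 : min (t+1) (n-1) = t+1 := by omega
    have h2 : min t (n-1) = t := by omega
    congr 1
    · apply congrArg; apply Fin.ext; show t+1 = (t+1) ⊓ (n-1); omega
    · apply congrArg; apply Fin.ext; show t = t ⊓ (n-1); omega
  · next h =>
    have h1 : min (t+1) (n-1) = n-1 := by omega
    have h2 : min t (n-1) = n-1 := by omega
    have : (⟨min (t+1) (n-1), by omega⟩ : Fin n) = ⟨min t (n-1), by omega⟩ :=
      Fin.ext (by simp [h1, h2])
    rw [this]; ring

lemma gap_nonneg {n : ℕ} {α : Fin n → ℝ} (hα : StrictMono α) (t : ℕ) :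
    0 ≤ gap α t := by
  unfold gap
  split
  · next h =>
    have := hα.monotone (show (⟨t, by omega⟩ : Fin n) ≤ ⟨t+1, h⟩ by simp)
    linarith
  · exact le_refl _

lemma sum_gap_Ico {n : ℕ} (α : Fin n → ℝ) (hn : 0 < n) {a b : ℕ} (hab : a ≤ b) :
    ∑ t ∈ Finset.Ico a b, gap α t = bt α hn b - bt α hn a := by
  have : ∀ t, gap α t = bt α hn (t+1) - bt α hn t := gap_eq α hn
  calc ∑ t ∈ Finset.Ico a b, gap α t
      = ∑ t ∈ Finset.Ico a b, (bt α hn (t+1) - bt α hn t) := by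
        exact Finset.sum_congr rfl (fun t _ => this t)
    _ = bt α hn b - bt α hn a := by
        rw [Finset.sum_Ico_eq_sub _ hab, Finset.sum_range_sub, Finset.sum_range_sub]
        ring

lemma rng_eq {n : ℕ} (α : Fin n → ℝ) (hα : StrictMono α) (S : Finset (Fin n))
    (h : S.Nonempty) : rng α S = α (S.max' h) - α (S.min' h) := by
  unfold rng
  rw [dif_pos h]
  congr 1
  · apply le_antisymm
    · exact Finset.sup'_le h α (fun x hx => hα.monotone (S.le_max' x hx))
    · exact Finset.le_sup' α (S.max'_mem h)
  · apply le_antisymm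
    · exact Finset.inf'_le α (S.min'_mem h)
    · exact Finset.le_inf' h α (fun x hx => hα.monotone (S.min'_le x hx))

lemma bt_eq {n : ℕ} (α : Fin n → ℝ) (hn : 0 < n) {v : ℕ} (hv : v < n) :
    bt α hn v = α ⟨v, hv⟩ := by
  unfold bt
  apply congrArg; apply Fin.ext; show v ⊓ (n-1) = v; omega

lemma exchange {n : ℕ} (α : Fin n → ℝ) (hα : StrictMono α) (T U : Finset ℕ)
    (hU : U ⊆ Finset.range (n-1)) (hcard : U.card ≤ T.card)
    (hbig : ∀ t ∈ T, ∀ s ∈ Finset.range (n - 1), s ∉ T → gap α s ≤ gap α t) :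
    ∑ t ∈ U, gap α t ≤ ∑ t ∈ T, gap α t := by
  have key : ∑ t ∈ U \ T, gap α t ≤ ∑ t ∈ T \ U, gap α t := by
    rcases (U \ T).eq_empty_or_nonempty with he | hne
    · rw [he, Finset.sum_empty]
      exact Finset.sum_nonneg (fun t _ => gap_nonneg hα t)
    · have hcd : (U \ T).card ≤ (T \ U).card := by
        have h1 := Finset.card_inter_add_card_sdiff U T
        have h2 := Finset.card_inter_add_card_sdiff T U
        rw [Finset.inter_comm] at h2
        omega
      have hTU : (T \ U).Nonempty := by
        rw [← Finset.card_pos] at hne ⊢; omega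
      set m := (T \ U).inf' hTU (gap α) with hm
      have hm0 : 0 ≤ m := Finset.le_inf' hTU _ (fun t _ => gap_nonneg hα t)
      have h1 : ∑ t ∈ U \ T, gap α t ≤ (U \ T).card • m := by
        apply Finset.sum_le_card_nsmul
        intro s hs
        rw [Finset.mem_sdiff] at hs
        apply Finset.le_inf'
        intro t ht
        rw [Finset.mem_sdiff] at ht
        exact hbig t ht.1 s (hU hs.1) hs.2
      have h2 : (T \ U).card • m ≤ ∑ t ∈ T \ U, gap α t :=
        Finset.card_nsmul_le_sum _ _ _ (fun t ht => Finset.inf'_le _ ht)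
      have h3 : (U \ T).card • m ≤ (T \ U).card • m := by
        simp only [nsmul_eq_mul]
        exact mul_le_mul_of_nonneg_right (by exact_mod_cast hcd) hm0
      linarith
  have e1 : ∑ t ∈ U ∩ T, gap α t + ∑ t ∈ U \ T, gap α t = ∑ t ∈ U, gap α t :=
    Finset.sum_inter_add_sum_sdiff U T _
  have e2 : ∑ t ∈ T ∩ U, gap α t + ∑ t ∈ T \ U, gap α t = ∑ t ∈ T, gap α t :=
    Finset.sum_inter_add_sum_sdiff T U _
  rw [Finset.inter_comm] at e2
  linarith


lemma rng_eq_sum {n : ℕ} (α : Fin n → ℝ) (hα : StrictMono α) (hn : 0 < n)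
    (S : Finset (Fin n)) (h : S.Nonempty) :
    rng α S = ∑ t ∈ Finset.Ico (S.min' h).val (S.max' h).val, gap α t := by
  rw [rng_eq α hα S h, sum_gap_Ico α hn (by exact_mod_cast S.min'_le _ (S.max'_mem h)),
    bt_eq α hn (S.max' h).isLt, bt_eq α hn (S.min' h).isLt]

lemma lower_bound {n k : ℕ} (hn : 2 ≤ n) (α : Fin n → ℝ) (hα : StrictMono α)
    (hk : 2 ≤ k)
    (T : Finset ℕ) (hT : T ⊆ Finset.range (n - 1)) (hcard : T.card = k - 1)
    (hbig : ∀ t ∈ T, ∀ s ∈ Finset.range (n - 1), s ∉ T → gap α s ≤ gap α t)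
    (P : Fin k → Finset (Fin n)) (hP : IsPartition P) :
    (α ⟨n - 1, by omega⟩ - α ⟨0, by omega⟩) - ∑ t ∈ T, gap α t ≤ ∑ i, rng α (P i) := by
  classical
  have hn0 : 0 < n := by omega
  obtain ⟨hne, hdisj, hcov⟩ := hP
  set a : Fin k → ℕ := fun i => ((P i).min' (hne i)).val with ha
  set b : Fin k → ℕ := fun i => ((P i).max' (hne i)).val with hb
  -- crossed gaps
  set C : Finset ℕ := (Finset.range (n-1)).filter (fun t => ∃ i, a i ≤ t ∧ t < b i) with hC
  set U : Finset ℕ := Finset.range (n-1) \ C with hU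
  -- step 1 : sum over crossed gaps ≤ total range sum
  have hk0 : 0 < k := by omega
  set j : ℕ → Fin k := fun t =>
    if h : ∃ i, a i ≤ t ∧ t < b i then h.choose else ⟨0, hk0⟩ with hj
  have step1 : ∑ t ∈ C, gap α t ≤ ∑ i, rng α (P i) := by
    rw [← Finset.sum_fiberwise_of_maps_to (g := j) (fun t _ => Finset.mem_univ (j t))]
    apply Finset.sum_le_sum
    intro i _
    rw [rng_eq_sum α hα hn0 (P i) (hne i)]
    apply Finset.sum_le_sum_of_subset_of_nonneg
    · intro t ht
      simp only [Finset.mem_filter, hC] at ht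
      obtain ⟨⟨-, hex⟩, hji⟩ := ht
      have hspec := hex.choose_spec
      rw [hj] at hji
      simp only [dif_pos hex] at hji
      rw [hji] at hspec
      exact Finset.mem_Ico.mpr hspec
    · intro t _ _
      exact gap_nonneg hα t
  -- step 2 : few uncrossed gaps
  set i₀ : Fin k := (hcov ⟨0, by omega⟩).choose with hi₀
  have hi₀m : (⟨0, by omega⟩ : Fin n) ∈ P i₀ := (hcov ⟨0, by omega⟩).choose_spec
  have memab : ∀ (i : Fin k) (v : Fin n), v ∈ P i → a i ≤ v.val ∧ v.val ≤ b i := by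
    intro i v hv
    exact ⟨(P i).min'_le v hv, (P i).le_max' v hv⟩
  have memab' : ∀ (i : Fin k) (t : ℕ) (ht : t < n), (⟨t, ht⟩ : Fin n) ∈ P i →
      a i ≤ t ∧ t ≤ b i := fun i t ht hv => memab i ⟨t, ht⟩ hv
  set g : ℕ → Fin k := fun t =>
    if h : t + 1 < n then (hcov ⟨t+1, h⟩).choose else i₀ with hg
  have hgmem : ∀ (t : ℕ) (ht : t < n - 1), (⟨t+1, by omega⟩ : Fin n) ∈ P (g t) := by
    intro t ht
    have h : t + 1 < n := by omega
    simp only [hg, dif_pos h]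
    exact (hcov ⟨t+1, h⟩).choose_spec
  have huncross : ∀ t ∈ U, ¬ ∃ i, a i ≤ t ∧ t < b i := by
    intro t ht
    rw [hU, Finset.mem_sdiff, hC] at ht
    intro hex
    exact ht.2 (Finset.mem_filter.mpr ⟨ht.1, hex⟩)
  have hUr : ∀ t ∈ U, t < n - 1 := by
    intro t ht
    rw [hU, Finset.mem_sdiff, Finset.mem_range] at ht
    exact ht.1
  have step2 : U.card ≤ k - 1 := by
    have hmaps : ∀ t ∈ U, g t ∈ Finset.univ.erase i₀ := by
      intro t ht
      have htn : t < n - 1 := hUr t ht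
      rw [Finset.mem_erase]
      refine ⟨?_, Finset.mem_univ _⟩
      intro heq
      apply huncross t ht
      refine ⟨i₀, ?_, ?_⟩
      · have := (memab' i₀ 0 (by omega) hi₀m).1
        omega
      · have := (memab' (g t) (t+1) (by omega) (hgmem t (hUr t ht))).2
        rw [heq] at this
        omega
    have hinj : Set.InjOn g U := by
      intro t ht t' ht' heq
      have htn : t < n - 1 := hUr t ht
      have htn' : t' < n - 1 := hUr t' ht'
      by_contra hne'
      rcases Nat.lt_or_ge t t' with hlt | hge
      · apply huncross t' ht'
        refine ⟨g t, ?_, ?_⟩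
        · have := (memab' (g t) (t+1) (by omega) (hgmem t (hUr t ht))).1
          omega
        · have := (memab' (g t') (t'+1) (by omega) (hgmem t' (hUr t' ht'))).2
          rw [← heq] at this
          omega
      · have hlt : t' < t := by omega
        apply huncross t ht
        refine ⟨g t, ?_, ?_⟩
        · have := (memab' (g t') (t'+1) (by omega) (hgmem t' (hUr t' ht'))).1
          rw [← heq] at this
          omega
        · have := (memab' (g t) (t+1) (by omega) (hgmem t (hUr t ht))).2
          omega
    have := Finset.card_le_card_of_injOn g hmaps hinj
    rw [Finset.card_erase_of_mem (Finset.mem_univ i₀), Finset.card_univ, Fintype.card_fin] at this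
    exact this
  -- step 3 : combine
  have hUsub : U ⊆ Finset.range (n-1) := Finset.sdiff_subset
  have step3 : ∑ t ∈ U, gap α t ≤ ∑ t ∈ T, gap α t :=
    exchange α hα T U hUsub (by omega) hbig
  have htot : ∑ t ∈ Finset.range (n-1), gap α t
      = α ⟨n - 1, by omega⟩ - α ⟨0, by omega⟩ := by
    rw [← Nat.Ico_zero_eq_range, sum_gap_Ico α hn0 (by omega),
      bt_eq α hn0 (by omega : n - 1 < n), bt_eq α hn0 hn0]
  have hsplit : ∑ t ∈ C, gap α t + ∑ t ∈ U, gap α t = ∑ t ∈ Finset.range (n-1), gap α t := by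
    rw [hU]
    have : C ⊆ Finset.range (n-1) := Finset.filter_subset _ _
    rw [add_comm, Finset.sum_sdiff this]
  linarith

lemma achieves {n k : ℕ} (hn : 2 ≤ n) (α : Fin n → ℝ) (hα : StrictMono α)
    (hk : 2 ≤ k) (hkn : k ≤ n)
    (T : Finset ℕ) (hT : T ⊆ Finset.range (n - 1)) (hcard : T.card = k - 1) :
    ∃ P : Fin k → Finset (Fin n), IsPartition P ∧
      ∑ i, rng α (P i) = (α ⟨n - 1, by omega⟩ - α ⟨0, by omega⟩) - ∑ t ∈ T, gap α t := by
  classical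
  have hn0 : 0 < n := by omega
  set c : ℕ → ℕ := fun t => (T.filter (· < t)).card with hc
  have hc0 : c 0 = 0 := by
    simp only [hc]
    rw [Finset.filter_false_of_mem (fun x _ => by omega), Finset.card_empty]
  have hmono : Monotone c := by
    intro t t' htt
    apply Finset.card_le_card
    intro x hx
    rw [Finset.mem_filter] at hx ⊢
    exact ⟨hx.1, by have := hx.2; omega⟩
  have hstep : ∀ t, c (t+1) = c t + (if t ∈ T then 1 else 0) := by
    intro t
    by_cases htT : t ∈ T
    · rw [if_pos htT]
      have he : T.filter (· < t+1) = insert t (T.filter (· < t)) := by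
        ext x
        simp only [Finset.mem_filter, Finset.mem_insert]
        constructor
        · rintro ⟨hxT, hx⟩
          rcases Nat.lt_succ_iff_lt_or_eq.mp hx with h | h
          · exact Or.inr ⟨hxT, h⟩
          · exact Or.inl h
        · rintro (rfl | ⟨hxT, hx⟩)
          · exact ⟨htT, Nat.lt_succ_self x⟩
          · exact ⟨hxT, by omega⟩
      simp only [hc]
      rw [he, Finset.card_insert_of_notMem (by simp)]
    · rw [if_neg htT]
      simp only [hc]
      congr 1
      ext x
      simp only [Finset.mem_filter]
      constructor
      · rintro ⟨hxT, hx⟩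
        refine ⟨hxT, ?_⟩
        have : x ≠ t := fun h => htT (h ▸ hxT)
        omega
      · rintro ⟨hxT, hx⟩
        exact ⟨hxT, by omega⟩
  have hle : ∀ t, c t ≤ k - 1 := by
    intro t
    calc c t ≤ T.card := Finset.card_le_card (Finset.filter_subset _ _)
      _ = k - 1 := hcard
  have hctop : c (n-1) = k - 1 := by
    simp only [hc]
    rw [Finset.filter_true_of_mem (fun x hx => by
      have := Finset.mem_range.mp (hT hx); simpa using this)]
    exact hcard
  have hsurj : ∀ j, j ≤ k - 1 → ∃ v, v ≤ n - 1 ∧ c v = j := by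
    intro j hj
    set V : Finset ℕ := (Finset.range n).filter (fun v => j ≤ c v) with hV
    have hVne : V.Nonempty := ⟨n-1, Finset.mem_filter.mpr
      ⟨Finset.mem_range.mpr (by omega), by rw [hctop]; exact hj⟩⟩
    set v := V.min' hVne with hv
    have hvV : v ∈ V := V.min'_mem hVne
    rw [hV, Finset.mem_filter, Finset.mem_range] at hvV
    obtain ⟨hvn, hjv⟩ := hvV
    rcases Nat.eq_zero_or_pos v with hv0 | hv0
    · refine ⟨0, by omega, ?_⟩
      rw [hc0]
      rw [hv0, hc0] at hjv
      omega
    · obtain ⟨w, hw⟩ : ∃ w, v = w + 1 := ⟨v - 1, by omega⟩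
      rw [hw] at hjv hvn
      have hwV : w ∉ V := fun hwm => by
        have := V.min'_le w hwm
        rw [← hv] at this
        omega
      have hcw : c w < j := by
        by_contra hle'
        exact hwV (Finset.mem_filter.mpr ⟨Finset.mem_range.mpr (by omega), by omega⟩)
      have := hstep w
      refine ⟨w + 1, by omega, ?_⟩
      split at this <;> omega
  set P : Fin k → Finset (Fin n) :=
    fun i => Finset.univ.filter (fun x => c x.val = i.val) with hP
  have hmem : ∀ (i : Fin k) (t : ℕ) (ht : t < n), (⟨t, ht⟩ : Fin n) ∈ P i ↔ c t = i.val := by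
    intro i t ht
    simp [hP]
  have hpart : IsPartition P := by
    refine ⟨?_, ?_, ?_⟩
    · intro i
      obtain ⟨v, hv, hcv⟩ := hsurj i.val (by have := i.isLt; omega)
      exact ⟨⟨v, by omega⟩, (hmem i v (by omega)).mpr hcv⟩
    · intro i j hij
      rw [Finset.disjoint_left]
      intro x hx hx'
      simp only [hP, Finset.mem_filter] at hx hx'
      exact hij (Fin.ext (hx.2 ▸ hx'.2))
    · intro v
      refine ⟨⟨c v.val, by have := hle v.val; omega⟩, ?_⟩
      simp [hP]
  refine ⟨P, hpart, ?_⟩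
  -- compute the sum
  obtain ⟨hne, hdisj, hcov⟩ := hpart
  have key : ∀ i : Fin k,
      Finset.Ico ((P i).min' (hne i)).val ((P i).max' (hne i)).val
        = (Finset.range (n-1)).filter (fun t => t ∉ T ∧ c t = i.val) := by
    intro i
    set a := ((P i).min' (hne i)).val with hA
    set b := ((P i).max' (hne i)).val with hB
    have hbn : b < n := ((P i).max' (hne i)).isLt
    have hca : c a = i.val := by
      have := (P i).min'_mem (hne i)
      simpa [hP] using this
    have hcb : c b = i.val := by
      have := (P i).max'_mem (hne i)
      simpa [hP] using this
    have memab' : ∀ (t : ℕ) (ht : t < n), (⟨t, ht⟩ : Fin n) ∈ P i → a ≤ t ∧ t ≤ b :=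
      fun t ht hv => ⟨(P i).min'_le _ hv, (P i).le_max' _ hv⟩
    ext t
    rw [Finset.mem_Ico, Finset.mem_filter, Finset.mem_range]
    constructor
    · rintro ⟨hat, htb⟩
      have htn : t < n - 1 := by omega
      have hct : c t = i.val :=
        le_antisymm (hcb ▸ hmono (by omega)) (hca ▸ hmono hat)
      have hct1 : c (t+1) = i.val :=
        le_antisymm (hcb ▸ hmono (by omega)) (hca ▸ hmono (by omega))
      have := hstep t
      refine ⟨htn, ?_, hct⟩
      intro htT
      rw [if_pos htT] at this
      omega
    · rintro ⟨htn, htT, hct⟩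
      have hct1 : c (t+1) = i.val := by
        have := hstep t
        rw [if_neg htT] at this
        omega
      have h1 := memab' t (by omega) ((hmem i t (by omega)).mpr hct)
      have h2 := memab' (t+1) (by omega) ((hmem i (t+1) (by omega)).mpr hct1)
      exact ⟨h1.1, by omega⟩
  have hsum1 : ∀ i : Fin k, rng α (P i)
      = ∑ t ∈ (Finset.range (n-1)).filter (fun t => t ∉ T ∧ c t = i.val), gap α t := by
    intro i
    rw [rng_eq_sum α hα hn0 (P i) (hne i), key i]
  have hfib : ∑ i, rng α (P i)
      = ∑ t ∈ (Finset.range (n-1)).filter (fun t => t ∉ T), gap α t := by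
    rw [← Finset.sum_fiberwise_of_maps_to
      (g := fun t => (⟨c t, by have := hle t; omega⟩ : Fin k))
      (fun t _ => Finset.mem_univ _) (gap α)]
    apply Finset.sum_congr rfl
    intro i _
    rw [hsum1 i]
    congr 1
    ext t
    simp only [Finset.mem_filter, Finset.mem_range, Fin.ext_iff]
    tauto
  have htot : ∑ t ∈ Finset.range (n-1), gap α t
      = α ⟨n - 1, by omega⟩ - α ⟨0, by omega⟩ := by
    rw [← Nat.Ico_zero_eq_range, sum_gap_Ico α hn0 (by omega),
      bt_eq α hn0 (by omega : n - 1 < n), bt_eq α hn0 hn0]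
  have hsplit := Finset.sum_filter_add_sum_filter_not (Finset.range (n-1))
    (fun t => t ∈ T) (gap α)
  have hfT : (Finset.range (n-1)).filter (fun t => t ∈ T) = T := by
    rw [Finset.filter_mem_eq_inter, Finset.inter_eq_right.mpr hT]
  rw [hfib]
  rw [hfT, htot] at hsplit
  linarith

/-- The minimum of `Σ range(Sᵢ)` over `k`-partitions equals `(αₙ - α₁)` minus the sum
of the `k-1` largest gaps. -/
theorem stmt10 (n : ℕ) (hn : 2 ≤ n) (α : Fin n → ℝ) (hα : StrictMono α)
    (k : ℕ) (hk : 2 ≤ k) (hkn : k ≤ n)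
    (T : Finset ℕ) (hT : T ⊆ Finset.range (n - 1)) (hcard : T.card = k - 1)
    (hbig : ∀ t ∈ T, ∀ s ∈ Finset.range (n - 1), s ∉ T → gap α s ≤ gap α t) :
    sInf {x : ℝ | ∃ P : Fin k → Finset (Fin n), IsPartition P ∧
        x = ∑ i, rng α (P i)} =
      (α ⟨n - 1, by omega⟩ - α ⟨0, by omega⟩) - ∑ t ∈ T, gap α t := by
  obtain ⟨P₀, hP₀, hsum₀⟩ := achieves hn α hα hk hkn T hT hcard
  have hmem : (α ⟨n - 1, by omega⟩ - α ⟨0, by omega⟩) - ∑ t ∈ T, gap α t ∈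
      {x : ℝ | ∃ P : Fin k → Finset (Fin n), IsPartition P ∧ x = ∑ i, rng α (P i)} :=
    ⟨P₀, hP₀, hsum₀.symm⟩
  have hlb : ∀ x ∈ {x : ℝ | ∃ P : Fin k → Finset (Fin n), IsPartition P ∧
      x = ∑ i, rng α (P i)},
      (α ⟨n - 1, by omega⟩ - α ⟨0, by omega⟩) - ∑ t ∈ T, gap α t ≤ x := by
    rintro x ⟨P, hP, rfl⟩
    exact lower_bound hn α hα hk T hT hcard hbig P hP
  exact le_antisymm (csInf_le ⟨_, hlb⟩ hmem) (le_csInf ⟨_, hmem⟩ hlb)
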